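/- arXiv:1809.03017 — 2 statements merged into one kernel-verified Lean document; each statement's English description precedes it below -/
import Mathlib

section
/- Let e : A → X be bijective on objects and m : B → Y fully faithful, and suppose given functors v, v' : A → B and u, u' : X → Y with m ∘ v = u ∘ e and m ∘ v' = u' ∘ e, and let w, w' : X → B be the unique functors with w ∘ e = v, m ∘ w = u and w' ∘ e = v', m ∘ w' = u'. Given natural transformations σ : v ⟹ v' and τ : u ⟹ u' such that the whiskering of τ with e equals the whiskering of m with σ (i.e. τ_{e(a)} = m(σ_a) for every object a of A), there exists a unique natural transformation ρ : w ⟹ w' such that ρ_{e(a)} = σ_a for every object a of A and m(ρ_x) = τ_x for every object x of X. -/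
open CategoryTheory

universe v₁ v₂ v₃ v₄ u₁ u₂ u₃ u₄

namespace CategoryTheory.Functor.FullyFaithful

variable {X : Type u₂} [Category.{v₂} X] {B : Type u₃} [Category.{v₃} B]
  {Y : Type u₄} [Category.{v₄} Y] {m : B ⥤ Y}

theorem existsUnique_natTrans_map_app_eq (hm : m.FullyFaithful) {w w' : X ⥤ B}
    (α : w ⋙ m ⟶ w' ⋙ m) : ∃! ρ : w ⟶ w', ∀ x, m.map (ρ.app x) = α.app x :=
  ⟨(hm.whiskeringRight X).preimage α, fun x => by simp,
    fun ρ hρ => NatTrans.ext <| funext fun x => hm.map_injective (by simp [hρ])⟩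

end CategoryTheory.Functor.FullyFaithful

theorem unique_natTrans_lift_along_boFF_general
    {A : Type u₁} [Category.{v₁} A] {X : Type u₂} [Category.{v₂} X]
    {B : Type u₃} [Category.{v₃} B] {Y : Type u₄} [Category.{v₄} Y]
    (e : A ⥤ X) (m : B ⥤ Y)
    (hm : ∀ a b : B, Function.Bijective (fun f : a ⟶ b => m.map f))
    (v v' : A ⥤ B) (u u' : X ⥤ Y)
    (hv : v ⋙ m = e ⋙ u) (hv' : v' ⋙ m = e ⋙ u')
    (w w' : X ⥤ B)
    (hwe : e ⋙ w = v) (hwm : w ⋙ m = u) (hwe' : e ⋙ w' = v') (hwm' : w' ⋙ m = u')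
    (σ : v ⟶ v') (τ : u ⟶ u')
    (hcompat : ∀ a : A, τ.app (e.obj a) =
      eqToHom (Functor.congr_obj hv a).symm ≫ m.map (σ.app a) ≫
        eqToHom (Functor.congr_obj hv' a)) :
    ∃! ρ : w ⟶ w',
      (∀ a : A, ρ.app (e.obj a) =
        eqToHom (Functor.congr_obj hwe a) ≫ σ.app a ≫
          eqToHom (Functor.congr_obj hwe' a).symm) ∧
      (∀ x : X, m.map (ρ.app x) =
        eqToHom (Functor.congr_obj hwm x) ≫ τ.app x ≫
          eqToHom (Functor.congr_obj hwm' x).symm) := by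
  obtain ⟨hmff⟩ := (Functor.FullyFaithful.nonempty_iff_map_bijective m).2 hm
  obtain ⟨ρ, hρ, huniq⟩ :=
    hmff.existsUnique_natTrans_map_app_eq (eqToHom hwm ≫ τ ≫ eqToHom hwm'.symm)
  simp only [NatTrans.comp_app, eqToHom_app] at hρ huniq
  refine ⟨ρ, ⟨fun a => hmff.map_injective ?_, hρ⟩, fun ρ' hρ' => huniq ρ' hρ'.2⟩
  simp [hρ, hcompat, eqToHom_map]

/-- Let `e : A ⥤ X` be bijective on objects and `m : B ⥤ Y` fully faithful. Given
`v, v' : A ⥤ B` and `u, u' : X ⥤ Y` with `m ∘ v = u ∘ e` and `m ∘ v' = u' ∘ e`, lifts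
`w, w' : X ⥤ B` with `w ∘ e = v`, `m ∘ w = u`, `w' ∘ e = v'`, `m ∘ w' = u'`, and natural
transformations `σ : v ⟹ v'`, `τ : u ⟹ u'` such that `τ_{e(a)} = m(σ_a)` for every object
`a` of `A`, there exists a unique natural transformation `ρ : w ⟹ w'` with
`ρ_{e(a)} = σ_a` for every object `a` of `A` and `m(ρ_x) = τ_x` for every object `x` of
`X` (all componentwise equalities expressed via the canonical `eqToHom`s). -/
theorem unique_natTrans_lift_along_boFF
    {A : Type u₁} [Category.{v₁} A] {X : Type u₂} [Category.{v₂} X]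
    {B : Type u₃} [Category.{v₃} B] {Y : Type u₄} [Category.{v₄} Y]
    (e : A ⥤ X) (m : B ⥤ Y)
    (he : Function.Bijective e.obj)
    (hm : ∀ a b : B, Function.Bijective (fun f : a ⟶ b => m.map f))
    (v v' : A ⥤ B) (u u' : X ⥤ Y)
    (hv : v ⋙ m = e ⋙ u) (hv' : v' ⋙ m = e ⋙ u')
    (w w' : X ⥤ B)
    (hwe : e ⋙ w = v) (hwm : w ⋙ m = u) (hwe' : e ⋙ w' = v') (hwm' : w' ⋙ m = u')
    (σ : v ⟶ v') (τ : u ⟶ u')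
    (hcompat : ∀ a : A, τ.app (e.obj a) =
      eqToHom (Functor.congr_obj hv a).symm ≫ m.map (σ.app a) ≫
        eqToHom (Functor.congr_obj hv' a)) :
    ∃! ρ : w ⟶ w',
      (∀ a : A, ρ.app (e.obj a) =
        eqToHom (Functor.congr_obj hwe a) ≫ σ.app a ≫
          eqToHom (Functor.congr_obj hwe' a).symm) ∧
      (∀ x : X, m.map (ρ.app x) =
        eqToHom (Functor.congr_obj hwm x) ≫ τ.app x ≫
          eqToHom (Functor.congr_obj hwm' x).symm) :=
  unique_natTrans_lift_along_boFF_general e m hm v v' u u' hv hv' w w' hwe hwm hwe' hwm' σ τ hcompat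
end

section
/- Suppose V has finite limits and all small coproducts and is strongly concrete. Then the functor bV : Set → V preserves equalizers: for every equalizer diagram E → S ⇉ T in Set, the image diagram bV E → bV S ⇉ bV T is an equalizer diagram in V. -/
/-!
An element `x` of the underlying set of the vertex `X` of a fork `s : X ⟶ bV A` over
`bV f, bV g` is sent by `S s` and the unit isomorphism to a point of the set-theoretic equalizer
`E = {a | f a = g a}`. So if `E` is empty, `X` has no elements and is initial. Otherwise the
inclusion `ι : E ⟶ A` has a retraction `ρ`, and `s ≫ bV ρ` is the required factorisation: by
faithfulness of `S` it suffices that `bV (ρ ≫ ι)` fixes the elements of `S (bV A)` coming from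
`E`, which is naturality of the unit since `ρ ≫ ι` fixes `E` pointwise.
-/

open CategoryTheory CategoryTheory.Limits

universe v u

variable (V : Type u) [Category.{v} V]

/-- The functor `bV : Set → V` sending a set `S` to the coproduct of copies of the terminal
object `∗` of `V` indexed by `S`. -/
noncomputable def bV [HasTerminal V] [HasCoproducts.{v} V] : Type v ⥤ V where
  obj S := ∐ fun (_ : S) => ⊤_ V
  map {S T} f := Sigma.desc fun s => Sigma.ι (fun (_ : T) => ⊤_ V) (f s)
  map_id S := by ext s; simp
  map_comp f g := by ext s; simp

/-- `V` is strongly concrete if there is an underlying-set functor `S : V → Set` such that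
(i) the identity functor of `Set` is naturally isomorphic to `S ∘ bV`, (ii) `S` is faithful,
and (iii) `S X` is empty if and only if `X` is an initial object of `V`. -/
structure StronglyConcrete [HasTerminal V] [HasCoproducts.{v} V] where
  S : V ⥤ Type v
  unitIso : 𝟭 (Type v) ≅ bV V ⋙ S
  faithful : S.Faithful
  empty_iff_initial : ∀ X : V, IsEmpty (S.obj X) ↔ Nonempty (IsInitial X)

section

variable {C : Type*} [Category C] {F : Type v ⥤ C} {G : C ⥤ Type v}
  (e : 𝟭 (Type v) ≅ F ⋙ G) {A B : Type v} {f g : A ⟶ B}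

lemma inv_app_map_fork_ι_equalizes (s : Fork (F.map f) (F.map g)) (x : G.obj s.pt) :
    f (e.inv.app A (G.map s.ι x)) = g (e.inv.app A (G.map s.ι x)) := by
  have hs : G.map (F.map f) (G.map s.ι x) = G.map (F.map g) (G.map s.ι x) := by
    simp only [← Functor.map_comp_apply, s.condition]
  have hf := NatTrans.naturality_apply e.inv f (G.map s.ι x)
  have hg := NatTrans.naturality_apply e.inv g (G.map s.ι x)
  simp only [Functor.comp_map, Functor.id_map] at hf hg
  rw [← hf, ← hg, hs]

lemma map_map_apply_eq_self (t : A ⟶ A) (y : G.obj (F.obj A))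
    (ht : t (e.inv.app A y) = e.inv.app A y) : G.map (F.map t) y = y := by
  obtain ⟨a, rfl⟩ : ∃ a, e.hom.app A a = y := ⟨e.inv.app A y, by simp⟩
  simp only [Iso.hom_inv_id_app_apply] at ht
  simpa [ht] using (NatTrans.naturality_apply e.hom t a).symm

variable [G.Faithful]

include e in
lemma fork_ι_comp_map_eq_self (s : Fork (F.map f) (F.map g)) (t : A ⟶ A)
    (ht : ∀ a, f a = g a → t a = a) : s.ι ≫ F.map t = s.ι :=
  G.map_injective <| ConcreteCategory.hom_ext _ _ fun x => by
    rw [Functor.map_comp_apply]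
    exact map_map_apply_eq_self e t _ (ht _ (inv_app_map_fork_ι_equalizes e s x))

variable (F) in
include e in
lemma preservesLimit_parallelPair_of_faithful
    (hG : ∀ X, IsEmpty (G.obj X) → Nonempty (IsInitial X)) (f g : A ⟶ B) :
    PreservesLimit (parallelPair f g) F := by
  let ι : {a // f a = g a} ⟶ A := ↾Subtype.val
  have hι : ι ≫ f = ι ≫ g := by ext x; exact x.2
  refine preservesLimit_of_preserves_limit_cone (Types.equalizerLimit (g := f) (h := g)).isLimit <|
    (isLimitMapConeForkEquiv F hι).symm <| Fork.IsLimit.mk' _ fun s => ?_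
  by_cases hE : Nonempty {a // f a = g a}
  · let ρ : A ⟶ {a // f a = g a} := ↾(Function.invFun Subtype.val)
    have hρ : F.map ι ≫ F.map ρ = 𝟙 _ := by
      rw [← F.map_comp, ← F.map_id]
      congr 1
      ext x
      exact congrArg Subtype.val (Function.leftInverse_invFun Subtype.val_injective x)
    have hfac : (s.ι ≫ F.map ρ) ≫ F.map ι = s.ι := by
      rw [Category.assoc, ← F.map_comp]
      exact fork_ι_comp_map_eq_self e s (ρ ≫ ι) fun a ha =>
        Function.invFun_eq (f := Subtype.val) ⟨⟨a, ha⟩, rfl⟩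
    refine ⟨s.ι ≫ F.map ρ, hfac, fun {m} (hm : m ≫ F.map ι = s.ι) => ?_⟩
    rw [← hm, Category.assoc, hρ]
    exact (Category.comp_id m).symm
  · have hI : IsInitial s.pt := Classical.choice <|
      hG s.pt ⟨fun x => hE ⟨⟨_, inv_app_map_fork_ι_equalizes e s x⟩⟩⟩
    exact ⟨hI.to _, hI.hom_ext _ _, fun _ => hI.hom_ext _ _⟩

variable (F) in
include e in
lemma preservesLimitsOfShape_walkingParallelPair_of_faithful
    (hG : ∀ X, IsEmpty (G.obj X) → Nonempty (IsInitial X)) :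
    PreservesLimitsOfShape WalkingParallelPair F where
  preservesLimit {K} :=
    have := preservesLimit_parallelPair_of_faithful F e hG (K.map .left) (K.map .right)
    preservesLimit_of_iso_diagram F (diagramIsoParallelPair K).symm

end

/-- Suppose `V` has finite limits and all small coproducts and is strongly concrete. Then
`bV : Set → V` preserves equalizers: it preserves all limits of parallel pairs, so the image
of every equalizer diagram `E → S ⇉ T` in `Set` is an equalizer diagram in `V`. -/
theorem bV_preservesEqualizers
    [HasFiniteLimits V] [HasCoproducts.{v} V]
    (sc : StronglyConcrete V) :
    PreservesLimitsOfShape WalkingParallelPair (bV V) :=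
  have := sc.faithful
  preservesLimitsOfShape_walkingParallelPair_of_faithful (bV V) sc.unitIso
    fun X => (sc.empty_iff_initial X).mp
end
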